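/- The cycle graph C6 on 6 vertices is perfect, but its utter graph u(C6) is not perfect; hence the class of perfect graphs is not stable under taking utter graphs. -/

import Mathlib

open SimpleGraph

universe u

variable {V : Type u}

/-- The clique number of a graph, as an extended natural number:
the supremum of the cardinalities of its (finite) cliques. -/
noncomputable def cliqueNumber (G : SimpleGraph V) : ℕ∞ :=
  ⨆ (t : Finset V) (_ : G.IsClique (t : Set V)), (t.card : ℕ∞)

/-- A graph is perfect if every induced subgraph has chromatic number equal
to its clique number. -/
def IsPerfect (G : SimpleGraph V) : Prop :=
  ∀ s : Set V, (G.induce s).chromaticNumber = cliqueNumber (G.induce s)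

/-- The contraction `G/F` of a set `F` of edges: vertices are the connected components
of the spanning subgraph `(V, F)`, two distinct components being adjacent iff `G` has
an edge between them. -/
def contractEdges (G : SimpleGraph V) (F : Set (Sym2 V)) :
    SimpleGraph (SimpleGraph.fromEdgeSet F).ConnectedComponent where
  Adj c d := c ≠ d ∧ ∃ x y : V,
      (SimpleGraph.fromEdgeSet F).connectedComponentMk x = c ∧
      (SimpleGraph.fromEdgeSet F).connectedComponentMk y = d ∧ G.Adj x y
  symm := by
    constructor
    rintro c d ⟨hne, x, y, hx, hy, hxy⟩
    exact ⟨hne.symm, y, x, hy, hx, hxy.symm⟩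
  loopless := ⟨fun c h => h.1 rfl⟩

/-- A graph is contraction perfect if the contraction of any set of its edges
yields a perfect graph. -/
def IsContractionPerfect (G : SimpleGraph V) : Prop :=
  ∀ F : Set (Sym2 V), F ⊆ G.edgeSet → IsPerfect (contractEdges G F)

/-- `G` contains a hole (induced cycle, `n ≥ 4`) on `n` vertices. -/
def HasHole (G : SimpleGraph V) (n : ℕ) : Prop :=
  4 ≤ n ∧ ∃ s : Set V, Nonempty (G.induce s ≃g cycleGraph n)

/-- `G` contains an antihole (induced complement of a cycle, `n ≥ 4`) on `n` vertices. -/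
def HasAntihole (G : SimpleGraph V) (n : ℕ) : Prop :=
  4 ≤ n ∧ ∃ s : Set V, Nonempty ((G.induce s)ᶜ ≃g cycleGraph n)

/-- `u`, `v` and `w 0, …, w (p-1)` (thought of as `w_1, …, w_p`) form an expanded antihole
in `G`: `uv` is an edge, the `w i` are distinct vertices different from `u` and `v`
inducing an antipath in this order, `u` is adjacent exactly to `w_2, …, w_{p-2}` among them,
and `v` is adjacent exactly to `w_3, …, w_{p-1}` among them. -/
def IsExpandedAntihole (G : SimpleGraph V) (u v : V) (p : ℕ) (w : Fin p → V) : Prop :=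
  6 ≤ p ∧ Even p ∧ G.Adj u v ∧ Function.Injective w ∧
  (∀ i, w i ≠ u) ∧ (∀ i, w i ≠ v) ∧
  (∀ i j, G.Adj (w i) (w j) ↔ (i ≠ j ∧ (i : ℕ) + 1 ≠ (j : ℕ) ∧ (j : ℕ) + 1 ≠ (i : ℕ))) ∧
  (∀ i, G.Adj u (w i) ↔ (1 ≤ (i : ℕ) ∧ (i : ℕ) ≤ p - 3)) ∧
  (∀ i, G.Adj v (w i) ↔ (2 ≤ (i : ℕ) ∧ (i : ℕ) ≤ p - 2))

/-- The contraction `G/uv` of a single edge `uv`: delete `u` and `v` and add a new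
vertex (here `none`) adjacent to every vertex of `N(u) ∪ N(v)`. -/
def contractOne (G : SimpleGraph V) (u v : V) :
    SimpleGraph (Option {x : V // x ≠ u ∧ x ≠ v}) where
  Adj a b :=
    match a, b with
    | some x, some y => G.Adj x.1 y.1
    | some x, none => G.Adj x.1 u ∨ G.Adj x.1 v
    | none, some y => G.Adj u y.1 ∨ G.Adj v y.1
    | none, none => False
  symm := by
    constructor
    rintro (_ | x) (_ | y) h
    · exact h
    · exact h.imp (fun h' => h'.symm) (fun h' => h'.symm)
    · exact h.imp (fun h' => h'.symm) (fun h' => h'.symm)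
    · exact h.symm
  loopless := by
    constructor
    rintro (_ | x) h
    · exact h
    · exact G.loopless.irrefl _ h

/-- The utter graph of `G`, on vertex set `V(G) ∪ E(G)`. -/
def utterGraph (G : SimpleGraph V) : SimpleGraph (V ⊕ G.edgeSet) where
  Adj a b :=
    match a, b with
    | Sum.inl x, Sum.inl y => G.Adj x y
    | Sum.inl x, Sum.inr e => x ∈ (e : Sym2 V) ∨ ∃ y ∈ (e : Sym2 V), G.Adj x y
    | Sum.inr e, Sum.inl x => x ∈ (e : Sym2 V) ∨ ∃ y ∈ (e : Sym2 V), G.Adj x y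
    | Sum.inr e, Sum.inr f => e ≠ f ∧
        ((∃ x, x ∈ (e : Sym2 V) ∧ x ∈ (f : Sym2 V)) ∨
          ∃ x ∈ (e : Sym2 V), ∃ y ∈ (f : Sym2 V), G.Adj x y)
  symm := by
    constructor
    rintro (x | e) (y | f) h
    · exact h.symm
    · exact h
    · exact h
    · exact ⟨h.1.symm, h.2.imp (fun ⟨x, hx⟩ => ⟨x, hx.2, hx.1⟩)
        (fun ⟨x, hx, y, hy, hxy⟩ => ⟨y, hy, x, hx, hxy.symm⟩)⟩
  loopless := by
    constructor
    rintro (x | e) h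
    · exact G.loopless.irrefl _ h
    · exact h.1 rfl

/-- A stable (independent) set: a set of pairwise nonadjacent vertices. -/
def IsStableSet (G : SimpleGraph V) (s : Set V) : Prop :=
  ∀ x ∈ s, ∀ y ∈ s, ¬G.Adj x y

/-- A co-2-plex: a set of vertices inducing a subgraph of maximum degree at most one. -/
def IsCo2Plex (G : SimpleGraph V) (S : Set V) : Prop :=
  ∀ x ∈ S, ∀ y ∈ S, ∀ z ∈ S, G.Adj x y → G.Adj x z → y = z

/-- The graph obtained from `G` by adding a true twin (`none`) of the vertex `v`. -/
def addTrueTwin (G : SimpleGraph V) (v : V) : SimpleGraph (Option V) where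
  Adj a b :=
    match a, b with
    | some x, some y => G.Adj x y
    | some x, none => x = v ∨ G.Adj x v
    | none, some y => y = v ∨ G.Adj y v
    | none, none => False
  symm := by constructor; rintro (_ | x) (_ | y) h <;> first | exact h | exact h.symm
  loopless := by
    constructor
    rintro (_ | x) h
    · exact h
    · exact G.loopless.irrefl _ h

/-- The graph obtained from `G` by adding a false twin (`none`) of the vertex `v`. -/
def addFalseTwin (G : SimpleGraph V) (v : V) : SimpleGraph (Option V) where
  Adj a b :=
    match a, b with
    | some x, some y => G.Adj x y
    | some x, none => G.Adj x v
    | none, some y => G.Adj y v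
    | none, none => False
  symm := by constructor; rintro (_ | x) (_ | y) h <;> first | exact h | exact h.symm
  loopless := by
    constructor
    rintro (_ | x) h
    · exact h
    · exact G.loopless.irrefl _ h

/-!
`C₆` is bipartite, and a bipartite graph is perfect: every induced subgraph with an edge has
clique number and chromatic number `2`, and an edgeless one has both at most `1`.
In `u(C₆)` the vertices `0, 1, 2, 3` and the edge `45` induce a `C₅`, which is triangle-free
but not `2`-colourable, so `u(C₆)` is not perfect.
-/

open Finset

section Perfection

variable {G : SimpleGraph V}

lemma le_cliqueNumber_of_isClique {t : Finset V} (ht : G.IsClique (t : Set V)) :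
    (#t : ℕ∞) ≤ cliqueNumber G :=
  le_iSup₂_of_le t ht le_rfl

lemma cliqueNumber_le_chromaticNumber : cliqueNumber G ≤ G.chromaticNumber :=
  iSup₂_le fun _ ht => ht.card_le_chromaticNumber

lemma cliqueNumber_le_of_cliqueFree {n : ℕ} (h : G.CliqueFree (n + 1)) :
    cliqueNumber G ≤ n := by
  refine iSup₂_le fun t ht => ?_
  by_contra! hlt
  obtain ⟨u, hut, hu⟩ := exists_subset_card_eq (Order.add_one_le_of_lt (by exact_mod_cast hlt))
  exact h u ⟨ht.subset hut, hu⟩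

lemma SimpleGraph.IsBipartite.chromaticNumber_le_cliqueNumber (h : G.IsBipartite) :
    G.chromaticNumber ≤ cliqueNumber G := by
  classical
  by_cases hG : G = ⊥
  · cases isEmpty_or_nonempty V with
    | inl _ => simp [chromaticNumber_eq_zero_of_isEmpty]
    | inr hV =>
      obtain ⟨v⟩ := hV
      calc G.chromaticNumber ≤ 1 := (colorable_one_iff.mpr hG).chromaticNumber_le
        _ = #{v} := by simp
        _ ≤ cliqueNumber G := le_cliqueNumber_of_isClique (by simp)
  · obtain ⟨u, v, huv⟩ := ne_bot_iff_exists_adj.mp hG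
    calc G.chromaticNumber ≤ 2 := h.chromaticNumber_le
      _ = #{u, v} := by simp [card_pair huv.ne]
      _ ≤ cliqueNumber G :=
        le_cliqueNumber_of_isClique (by simpa using isClique_pair.mpr fun _ => huv)

lemma SimpleGraph.IsBipartite.isPerfect (h : G.IsBipartite) : IsPerfect G := fun s =>
  le_antisymm (IsBipartite.chromaticNumber_le_cliqueNumber (h.of_hom (Embedding.induce s).toHom))
    cliqueNumber_le_chromaticNumber

lemma IsPerfect.colorable_of_cliqueFree (hG : IsPerfect G) (s : Set V) {n : ℕ}
    (h : (G.induce s).CliqueFree (n + 1)) : (G.induce s).Colorable n := by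
  rw [← chromaticNumber_le_iff_colorable, hG s]
  exact cliqueNumber_le_of_cliqueFree h

lemma cycleGraph_cliqueFree_three {n : ℕ} (hn : 4 ≤ n) : (cycleGraph n).CliqueFree 3 := by
  obtain ⟨m, rfl⟩ := Nat.exists_eq_add_of_le' hn
  have sub_eq_one {x y : Fin (m + 4)} :
      (x - y).val = 1 ↔ x.val = y.val + 1 ∨ (x.val = 0 ∧ y.val = m + 3) := by
    rcases le_or_gt y x with h | h
    · rw [Fin.sub_val_of_le h]; omega
    · rw [Fin.coe_sub_iff_lt.mpr h]; omega
  rintro t ht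
  obtain ⟨a, b, c, hab, hac, hbc, -⟩ := is3Clique_iff.mp ht
  rw [cycleGraph_adj', sub_eq_one, sub_eq_one] at hab hac hbc
  omega

lemma IsPerfect.not_hasHole_of_odd (hG : IsPerfect G) {n : ℕ} (hn : Odd n) : ¬HasHole G n := by
  rintro ⟨hn4, s, ⟨e⟩⟩
  have hcol : (cycleGraph n).Colorable 2 :=
    (hG.colorable_of_cliqueFree s ((cycleGraph_cliqueFree_three hn4).comap e.isContained)).of_hom
      e.symm.toHom
  have h3 := hcol.chromaticNumber_le
  rw [chromaticNumber_cycleGraph_of_odd n (by omega) hn] at h3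
  exact absurd h3 (by norm_num)

end Perfection

instance {G : SimpleGraph V} [Fintype V] [DecidableEq V] [DecidableRel G.Adj] :
    DecidableRel (utterGraph G).Adj
  | .inl _, .inl _ => inferInstanceAs (Decidable (G.Adj _ _))
  | .inl _, .inr _ => inferInstanceAs (Decidable (_ ∨ _))
  | .inr _, .inl _ => inferInstanceAs (Decidable (_ ∨ _))
  | .inr _, .inr _ => inferInstanceAs (Decidable (_ ∧ _))

lemma utterGraph_cycleGraph_six_hasHole_five : HasHole (utterGraph (cycleGraph 6)) 5 := by
  let hole : cycleGraph 5 ↪g utterGraph (cycleGraph 6) :=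
    { toFun := ![.inl 0, .inl 1, .inl 2, .inl 3, .inr ⟨s(4, 5), by decide⟩]
      inj' := by decide
      map_rel_iff' := by decide }
  exact ⟨by norm_num, _, ⟨hole.isoInduceRange.symm⟩⟩

/-- The cycle `C₆` is perfect but its utter graph is not perfect;
hence perfect graphs are not stable under taking utter graphs. -/
theorem c6_perfect_utter_not_perfect :
    IsPerfect (cycleGraph 6) ∧ ¬IsPerfect (utterGraph (cycleGraph 6)) :=
  ⟨IsBipartite.isPerfect (cycleGraph.bicoloring_of_even 6 (by decide)).colorable,
    fun h => h.not_hasHole_of_odd (by decide) utterGraph_cycleGraph_six_hasHole_five⟩
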